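/- Let ν ∈ ℂ with ν not equal to any negative integer, and let z : ℕ≥1 → ℂ be a sequence of nonzero complex numbers such that (k ↦ 1/z_k²) is summable and, for every t ∈ ℂ, the infinite product ∏_{k≥1} (1 − t²/z_k²) converges with value ∑_{m≥0} (−1)^m/(m! (ν+1)_m) · (t/2)^{2m}. Then for every n ≥ 0, the Bessel multiple zeta value ζ_{B,ν}({2}^n) := ∑_{k₁>k₂>⋯>k_n≥1} ∏_{i=1}^n 1/z_{k_i}² equals 1/(2^{2n} · n! · (ν+1)_n). -/

import Mathlib

/-!
Substituting `u = -t²`, the Weierstrass product `∏ₖ (1 + u / z_k²)` expands, by multiplying out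
and grouping the finite subsets of indices by their size, into the power series
`∑ₘ eₘ uᵐ` whose coefficient `eₘ` is the `m`-th elementary symmetric sum of the `1 / z_k²`,
i.e. `ζ_{B,ν}({2}^m)`. The hypothesis says that this entire function equals
`j_ν(t) = ∑ₘ uᵐ / (4ᵐ m! (ν+1)ₘ)`, whose radius of convergence is infinite by the ratio test,
so the two coefficient sequences agree.
-/

/-- The Pochhammer symbol `(x)_n = x(x+1)⋯(x+n-1)` over `ℂ`. -/
noncomputable def poch (x : ℂ) (n : ℕ) : ℂ := (ascPochhammer ℂ n).eval x

/-- The multiple zeta value `ζ_z({s}^n) = ∑_{k₁ > ⋯ > k_n} ∏ᵢ 1/z_{kᵢ}^s`. -/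
noncomputable def mzv (z : ℕ → ℂ) (s n : ℕ) : ℂ :=
  ∑' f : {f : Fin n → ℕ // StrictAnti f}, ∏ i, 1 / (z (f.1 i)) ^ s

open Filter Finset Topology

noncomputable def tsumEsymm {ι R : Type*} [CommSemiring R] [TopologicalSpace R] (x : ι → R)
    (m : ℕ) : R :=
  ∑' s : Set.powersetCard ι m, ∏ i ∈ s.val, x i

section NormedRing

variable {ι R : Type*} [NormedCommRing R] [NormOneClass R] [CompleteSpace R] {x : ι → R}

theorem summable_finsetProd_const_mul (hx : Summable (‖x ·‖)) (u : R) :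
    Summable fun s : Finset ι ↦ ∏ i ∈ s, u * x i :=
  summable_finsetProd_of_summable_norm <|
    (hx.mul_left ‖u‖).of_nonneg_of_le (fun _ ↦ norm_nonneg _) fun _ ↦ norm_mul_le _ _

theorem hasSum_tsumEsymm_mul_pow (hx : Summable (‖x ·‖)) (u : R) :
    HasSum (fun m ↦ tsumEsymm x m * u ^ m) (∑' s : Finset ι, ∏ i ∈ s, u * x i) := by
  refine ((Equiv.sigmaFiberEquiv card).hasSum_iff.mpr
    (summable_finsetProd_const_mul hx u).hasSum).sigma fun m ↦ ?_
  have hm : Summable fun s : Set.powersetCard ι m ↦ ∏ i ∈ s.val, x i :=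
    (summable_finsetProd_of_summable_norm hx).comp_injective Subtype.val_injective
  refine (hm.hasSum.mul_right (u ^ m)).congr_fun fun s ↦ ?_
  simp only [Function.comp_apply, Equiv.sigmaFiberEquiv_apply, prod_mul_distrib, prod_const]
  rw [s.2, mul_comm]

theorem hasProd_one_add_mul (hx : Summable (‖x ·‖)) (u : R) :
    HasProd (fun i ↦ 1 + u * x i) (∑' m, tsumEsymm x m * u ^ m) := by
  rw [(hasSum_tsumEsymm_mul_pow hx u).tsum_eq]
  exact hasProd_one_add_of_hasSum_prod (summable_finsetProd_const_mul hx u).hasSum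

end NormedRing

namespace FormalMultilinearSeries

theorem ofScalars_radius_eq_top_of_summable {𝕜 : Type*} [RCLike 𝕜] {c : ℕ → 𝕜}
    (hc : ∀ u : 𝕜, Summable fun n ↦ c n * u ^ n) : (ofScalars 𝕜 c).radius = ⊤ := by
  refine ENNReal.eq_top_of_forall_nnreal_le fun r ↦ le_radius_of_tendsto _ (l := 0) ?_
  simpa [ofScalars_norm] using (hc ((r : ℝ) : 𝕜)).tendsto_atTop_zero.norm

theorem ofScalars_radius_tsumEsymm {ι 𝕜 : Type*} [RCLike 𝕜] {x : ι → 𝕜}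
    (hx : Summable (‖x ·‖)) : (ofScalars 𝕜 (tsumEsymm x)).radius = ⊤ :=
  ofScalars_radius_eq_top_of_summable fun u ↦ (hasSum_tsumEsymm_mul_pow hx u).summable

theorem eq_of_tsum_mul_pow_eventuallyEq {𝕜 : Type*} [NontriviallyNormedField 𝕜]
    [CompleteSpace 𝕜] {c b : ℕ → 𝕜} (hc : 0 < (ofScalars 𝕜 c).radius)
    (hb : 0 < (ofScalars 𝕜 b).radius)
    (h : ∀ᶠ u in 𝓝 0, ∑' n, c n * u ^ n = ∑' n, b n * u ^ n) : c = b := by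
  have hcs := ((ofScalars 𝕜 c).hasFPowerSeriesOnBall hc).hasFPowerSeriesAt
  have hbs := ((ofScalars 𝕜 b).hasFPowerSeriesOnBall hb).hasFPowerSeriesAt
  refine (ofScalars_series_eq_iff 𝕜 c b).mp ((hcs.congr ?_).eq_formalMultilinearSeries hbs)
  filter_upwards [h] with u hu
  change ofScalarsSum c u = ofScalarsSum b u
  simpa [ofScalars_sum_eq] using hu

end FormalMultilinearSeries

def strictAntiEquivPowersetCard (α : Type*) [LinearOrder α] (n : ℕ) :
    {f : Fin n → α // StrictAnti f} ≃ Set.powersetCard α n :=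
  Equiv.trans
    { toFun f := OrderEmbedding.ofStrictMono (f.1 ∘ Fin.rev) (f.2.comp Fin.rev_strictAnti)
      invFun e := ⟨e ∘ Fin.rev, e.strictMono.comp_strictAnti Fin.rev_strictAnti⟩
      left_inv f := by ext; simp
      right_inv e := by ext; simp }
    Set.powersetCard.ofFinEmbEquiv

theorem prod_strictAntiEquivPowersetCard {α M : Type*} [LinearOrder α] [CommMonoid M] {n : ℕ}
    (f : {f : Fin n → α // StrictAnti f}) (g : α → M) :
    ∏ k ∈ (strictAntiEquivPowersetCard α n f).val, g k = ∏ i, g (f.1 i) := by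
  simp only [strictAntiEquivPowersetCard, Equiv.trans_apply,
    Set.powersetCard.ofFinEmbEquiv_apply, Set.powersetCard.ofFinEmb, Set.powersetCard.val_map,
    prod_map]
  exact Fintype.prod_equiv Fin.revPerm _ _ fun _ ↦ rfl

theorem mzv_eq_tsumEsymm (z : ℕ → ℂ) (s n : ℕ) :
    mzv z s n = tsumEsymm (fun k ↦ 1 / z k ^ s) n := by
  rw [mzv, tsumEsymm, ← (strictAntiEquivPowersetCard ℕ n).tsum_eq]
  exact tsum_congr fun f ↦ (prod_strictAntiEquivPowersetCard f fun k ↦ 1 / z k ^ s).symm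

/-- `j_ν(t) = ∑ₘ besselCoeff ν m * (-t²)ᵐ`. -/
noncomputable def besselCoeff (ν : ℂ) (m : ℕ) : ℂ :=
  1 / (2 ^ (2 * m) * (Nat.factorial m : ℂ) * poch (ν + 1) m)

section Bessel

variable {ν : ℂ}

theorem poch_add_one_ne_zero (hν : ∀ k : ℕ, ν ≠ -((k : ℂ) + 1)) (m : ℕ) :
    poch (ν + 1) m ≠ 0 := by
  rw [poch, Ne, ascPochhammer_eval_eq_zero_iff]
  rintro ⟨k, -, hk⟩
  exact hν k (by linear_combination hk)

theorem besselCoeff_ne_zero (hν : ∀ k : ℕ, ν ≠ -((k : ℂ) + 1)) (m : ℕ) :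
    besselCoeff ν m ≠ 0 := by
  simp [besselCoeff, Nat.factorial_ne_zero, poch_add_one_ne_zero hν m]

theorem besselCoeff_succ (ν : ℂ) (m : ℕ) :
    besselCoeff ν (m + 1) = besselCoeff ν m * (4 * (m + 1) * (ν + 1 + m))⁻¹ := by
  simp only [besselCoeff, poch, ascPochhammer_succ_eval, Nat.factorial_succ, Nat.cast_mul,
    Nat.cast_succ, one_div, mul_inv]
  ring

theorem besselCoeff_mul_neg_sq_pow (ν t : ℂ) (m : ℕ) :
    besselCoeff ν m * (-t ^ 2) ^ m
      = (-1) ^ m / ((Nat.factorial m : ℂ) * poch (ν + 1) m) * (t / 2) ^ (2 * m) := by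
  rw [besselCoeff, div_pow]
  simp only [mul_inv, div_eq_mul_inv]
  ring

theorem tendsto_inv_add_natCast (x : ℂ) : Tendsto (fun n : ℕ ↦ (x + n)⁻¹) atTop (𝓝 0) :=
  tendsto_inv₀_cobounded.comp
    ((tendsto_const_add_cobounded x).comp tendsto_natCast_atTop_cobounded)

theorem ofScalars_radius_besselCoeff (hν : ∀ k : ℕ, ν ≠ -((k : ℂ) + 1)) :
    (FormalMultilinearSeries.ofScalars ℂ (besselCoeff ν)).radius = ⊤ := by
  refine FormalMultilinearSeries.ofScalars_radius_eq_top_of_tendsto _ _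
    (.of_forall (besselCoeff_ne_zero hν)) ?_
  have hlim : Tendsto (fun m : ℕ ↦ ((4 : ℂ) * (m + 1) * (ν + 1 + m))⁻¹) atTop (𝓝 0) := by
    have := ((tendsto_inv_add_natCast 1).const_mul 4⁻¹).mul (tendsto_inv_add_natCast (ν + 1))
    rw [mul_zero] at this
    refine this.congr fun m ↦ ?_
    simp only [mul_inv]
    ring
  refine (norm_zero (E := ℂ) ▸ hlim.norm).congr fun m ↦ ?_
  rw [← norm_div, Nat.succ_eq_add_one, besselCoeff_succ,
    mul_div_cancel_left₀ _ (besselCoeff_ne_zero hν m)]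

end Bessel

theorem bessel_mzv_two_general (ν : ℂ) (hν : ∀ k : ℕ, ν ≠ -((k : ℂ) + 1))
    (z : ℕ → ℂ)
    (hsum : Summable (fun k => 1 / (z k) ^ 2))
    (hprod : ∀ t : ℂ, HasProd (fun k => 1 - t ^ 2 / (z k) ^ 2)
      (∑' m : ℕ, (-1 : ℂ) ^ m / ((Nat.factorial m : ℂ) * poch (ν + 1) m) * (t / 2) ^ (2 * m)))
    (n : ℕ) :
    mzv z 2 n = 1 / (2 ^ (2 * n) * (Nat.factorial n : ℂ) * poch (ν + 1) n) := by
  have hnorm : Summable (‖1 / z · ^ 2‖) := hsum.norm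
  have hcoeff : tsumEsymm (fun k ↦ 1 / z k ^ 2) = besselCoeff ν := by
    refine FormalMultilinearSeries.eq_of_tsum_mul_pow_eventuallyEq
      ((FormalMultilinearSeries.ofScalars_radius_tsumEsymm hnorm).symm ▸ ENNReal.zero_lt_top)
      ((ofScalars_radius_besselCoeff hν).symm ▸ ENNReal.zero_lt_top) (.of_forall fun u ↦ ?_)
    obtain ⟨t, ht⟩ := IsAlgClosed.exists_pow_nat_eq (-u) two_pos
    rw [show u = -t ^ 2 by rw [ht, neg_neg]]
    refine (hasProd_one_add_mul hnorm (-t ^ 2)).unique ?_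
    convert hprod t using 1
    · exact funext fun k ↦ by ring
    · exact tsum_congr fun m ↦ besselCoeff_mul_neg_sq_pow ν t m
  rw [mzv_eq_tsumEsymm, hcoeff, besselCoeff]

/-- Evaluation of the Bessel multiple zeta values `ζ_{B,ν}({2}^n)`. -/
theorem bessel_mzv_two (ν : ℂ) (hν : ∀ k : ℕ, ν ≠ -((k : ℂ) + 1))
    (z : ℕ → ℂ) (hz : ∀ k, z k ≠ 0)
    (hsum : Summable (fun k => 1 / (z k) ^ 2))
    (hprod : ∀ t : ℂ, HasProd (fun k => 1 - t ^ 2 / (z k) ^ 2)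
      (∑' m : ℕ, (-1 : ℂ) ^ m / ((Nat.factorial m : ℂ) * poch (ν + 1) m) * (t / 2) ^ (2 * m)))
    (n : ℕ) :
    mzv z 2 n = 1 / (2 ^ (2 * n) * (Nat.factorial n : ℂ) * poch (ν + 1) n) :=
  bessel_mzv_two_general ν hν z hsum hprod n
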